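/- arXiv:1506.04440 — 3 statements merged into one kernel-verified Lean document; each statement's English description precedes it below -/
import Mathlib

section
/- The Hamming weight enumerator of the dual code satisfies W_{C^⊥}(X,Y) = (1/|C|) · W_C(X + (q−1)Y, X − Y), where W_C(X,Y) = Σ_{c∈C} X^{n−wt(c)} Y^{wt(c)}. -/
open Finset

private lemma addChar_map_sum' {A M : Type*} [AddCommMonoid A] [CommMonoid M]
    (ψ : AddChar A M) {ι : Type*} (s : Finset ι) (f : ι → A) :
    ψ (∑ i ∈ s, f i) = ∏ i ∈ s, ψ (f i) := by
  induction s using Finset.cons_induction with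
  | empty => simp
  | cons a s ha ih => simp [Finset.sum_cons, Finset.prod_cons, ψ.map_add_eq_mul, ih]

private lemma prod_ite_pow' {F : Type*} [Field F] [Fintype F] [DecidableEq F] {n : ℕ}
    (y : Fin n → F) (A B : ℂ) :
    (∏ i, if y i = 0 then A else B)
      = A ^ (n - (univ.filter fun i => y i ≠ 0).card) *
          B ^ (univ.filter fun i => y i ≠ 0).card := by
  rw [Finset.prod_ite, Finset.prod_const, Finset.prod_const]
  have h : (univ.filter fun i => y i = 0).card + (univ.filter fun i => y i ≠ 0).card = n := by
    simpa using Finset.card_filter_add_card_filter_not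
      (s := (univ : Finset (Fin n))) (p := fun i => y i = 0)
  have h2 : (univ.filter fun i => y i = 0).card
      = n - (univ.filter fun i => y i ≠ 0).card := by omega
  rw [h2]

/-- The MacWilliams theorem for the Hamming weight enumerator:
`W_{C^⊥}(X, Y) = (1/|C|) ⬝ W_C(X + (q-1) Y, X - Y)`. -/
theorem macwilliams_hamming_weight_enumerator
    {F : Type*} [Field F] [Fintype F] [DecidableEq F] {n : ℕ}
    (C : Submodule F (Fin n → F)) [DecidablePred (· ∈ C)] (X Y : ℂ) :
    (∑ y ∈ univ.filter (fun y : Fin n → F => ∀ x ∈ C, ∑ i, x i * y i = 0),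
        X ^ (n - (univ.filter fun i => y i ≠ 0).card) *
          Y ^ (univ.filter fun i => y i ≠ 0).card) =
      (Nat.card C : ℂ)⁻¹ *
        ∑ x ∈ univ.filter (fun x => x ∈ C),
          (X + ((Fintype.card F : ℂ) - 1) * Y) ^ (n - (univ.filter fun i => x i ≠ 0).card) *
            (X - Y) ^ (univ.filter fun i => x i ≠ 0).card := by
  set q : ℕ := Fintype.card F with hq
  let χ : AddChar F ℂ := AddChar.FiniteField.primitiveChar_to_Complex F
  have hχ : χ.IsPrimitive := AddChar.FiniteField.primitiveChar_to_Complex_isPrimitive F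
  -- (1) sum of a nontrivial multiplicative shift vanishes
  have hsum0 : ∀ c : F, c ≠ 0 → ∑ a : F, χ (c * a) = 0 := by
    intro c hc
    have h := AddChar.sum_eq_zero_of_ne_one (hχ hc)
    simpa [AddChar.mulShift_apply] using h
  -- (2) single-coordinate Fourier transform
  have hcoord : ∀ c : F,
      (∑ a : F, χ (c * a) * (if a = 0 then X else Y))
        = if c = 0 then X + ((q : ℂ) - 1) * Y else X - Y := by
    intro c
    rw [← Finset.add_sum_erase _ _ (Finset.mem_univ (0 : F))]
    simp only [mul_zero, AddChar.map_zero_eq_one, if_pos rfl, one_mul]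
    have herase : ∀ a ∈ univ.erase (0 : F),
        χ (c * a) * (if a = 0 then X else Y) = χ (c * a) * Y := by
      intro a ha; rw [if_neg (Finset.ne_of_mem_erase ha)]
    rw [Finset.sum_congr rfl herase, ← Finset.sum_mul]
    by_cases hc : c = 0
    · subst hc
      simp only [zero_mul, AddChar.map_zero_eq_one, if_pos rfl, if_true]
      rw [Finset.sum_const, Finset.card_erase_of_mem (mem_univ 0), Finset.card_univ,
        nsmul_eq_mul, mul_one, Nat.cast_sub Fintype.card_pos, Nat.cast_one, ← hq]
    · have h1 : ∑ a ∈ univ.erase (0 : F), χ (c * a) = -1 := by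
        have h2 := hsum0 c hc
        rw [← Finset.add_sum_erase _ _ (Finset.mem_univ (0 : F))] at h2
        simp only [mul_zero, AddChar.map_zero_eq_one] at h2
        linear_combination h2
      rw [h1, if_neg hc]
      simp only [if_pos rfl, if_true]
      ring
    -- end hcoord
  -- (3) Fourier transform of the weight function
  have hfour : ∀ x : Fin n → F,
      (∑ y : Fin n → F, χ (∑ i, x i * y i) *
          (X ^ (n - (univ.filter fun i => y i ≠ 0).card) *
            Y ^ (univ.filter fun i => y i ≠ 0).card))
        = (X + ((q : ℂ) - 1) * Y) ^ (n - (univ.filter fun i => x i ≠ 0).card) *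
            (X - Y) ^ (univ.filter fun i => x i ≠ 0).card := by
    intro x
    have step1 : ∀ y : Fin n → F,
        χ (∑ i, x i * y i) *
            (X ^ (n - (univ.filter fun i => y i ≠ 0).card) *
              Y ^ (univ.filter fun i => y i ≠ 0).card)
          = ∏ i, (χ (x i * y i) * (if y i = 0 then X else Y)) := by
      intro y
      rw [Finset.prod_mul_distrib, addChar_map_sum', prod_ite_pow']
    rw [Finset.sum_congr rfl fun y _ => step1 y,
      ← Fintype.prod_sum (fun i (a : F) => χ (x i * a) * (if a = 0 then X else Y))]
    rw [Finset.prod_congr rfl fun i _ => hcoord (x i), prod_ite_pow']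
  -- (4) character sum over the code
  have hker : ∀ y : Fin n → F, (¬ ∀ x ∈ C, ∑ i, x i * y i = 0) →
      (∑ x ∈ univ.filter (fun x => x ∈ C), χ (∑ i, x i * y i)) = 0 := by
    intro y hy
    push_neg at hy
    obtain ⟨x0, hx0C, hx0⟩ := hy
    obtain ⟨a, ha⟩ := AddChar.ne_one_iff.mp (hχ hx0)
    have ha' : χ ((∑ i, x0 i * y i) * a) ≠ 1 := by
      simpa [AddChar.mulShift_apply] using ha
    set S := ∑ x ∈ univ.filter (fun x => x ∈ C), χ (∑ i, x i * y i) with hS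
    have key : χ ((∑ i, x0 i * y i) * a) * S = S := by
      rw [hS, Finset.mul_sum]
      refine Finset.sum_equiv (Equiv.addRight (a • x0)) (fun z => ?_) (fun z hz => ?_)
      · simp only [Finset.mem_filter, Finset.mem_univ, true_and, Equiv.coe_addRight]
        constructor
        · exact fun h => C.add_mem h (C.smul_mem a hx0C)
        · intro h
          have h' := C.sub_mem h (C.smul_mem a hx0C)
          simpa using h'
      · rw [← AddChar.map_add_eq_mul]
        congr 1
        simp only [Equiv.coe_addRight, Pi.add_apply, Pi.smul_apply, smul_eq_mul]
        have h4 : ∀ i, (z i + a * x0 i) * y i = z i * y i + a * (x0 i * y i) :=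
          fun i => by ring
        rw [Finset.sum_congr rfl fun i _ => h4 i, Finset.sum_add_distrib, ← Finset.mul_sum]
        ring
    have h5 : (χ ((∑ i, x0 i * y i) * a) - 1) * S = 0 := by linear_combination key
    rcases mul_eq_zero.mp h5 with h6 | h6
    · exact absurd (sub_eq_zero.mp h6) ha'
    · exact h6
  -- cardinality
  have hcard : ((univ.filter (fun x => x ∈ C)).card : ℂ) = (Nat.card C : ℂ) := by
    congr 1
    rw [Nat.card_eq_fintype_card]
    exact (Fintype.card_of_subtype _ (by simp)).symm
  have hN : (Nat.card C : ℂ) ≠ 0 := by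
    have : 0 < Nat.card C := Nat.card_pos
    exact_mod_cast this.ne'
  -- (5) put everything together
  have key : (∑ x ∈ univ.filter (fun x => x ∈ C),
        (X + ((q : ℂ) - 1) * Y) ^ (n - (univ.filter fun i => x i ≠ 0).card) *
          (X - Y) ^ (univ.filter fun i => x i ≠ 0).card)
      = (Nat.card C : ℂ) *
          ∑ y ∈ univ.filter (fun y : Fin n → F => ∀ x ∈ C, ∑ i, x i * y i = 0),
            X ^ (n - (univ.filter fun i => y i ≠ 0).card) *
              Y ^ (univ.filter fun i => y i ≠ 0).card := by
    calc
      (∑ x ∈ univ.filter (fun x => x ∈ C),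
          (X + ((q : ℂ) - 1) * Y) ^ (n - (univ.filter fun i => x i ≠ 0).card) *
            (X - Y) ^ (univ.filter fun i => x i ≠ 0).card)
        = ∑ x ∈ univ.filter (fun x => x ∈ C), ∑ y : Fin n → F,
            χ (∑ i, x i * y i) *
              (X ^ (n - (univ.filter fun i => y i ≠ 0).card) *
                Y ^ (univ.filter fun i => y i ≠ 0).card) :=
          Finset.sum_congr rfl fun x _ => (hfour x).symm
      _ = ∑ y : Fin n → F,
            (∑ x ∈ univ.filter (fun x => x ∈ C), χ (∑ i, x i * y i)) *
              (X ^ (n - (univ.filter fun i => y i ≠ 0).card) *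
                Y ^ (univ.filter fun i => y i ≠ 0).card) := by
          rw [Finset.sum_comm]
          exact Finset.sum_congr rfl fun y _ => (Finset.sum_mul _ _ _).symm
      _ = (Nat.card C : ℂ) *
            ∑ y ∈ univ.filter (fun y : Fin n → F => ∀ x ∈ C, ∑ i, x i * y i = 0),
              X ^ (n - (univ.filter fun i => y i ≠ 0).card) *
                Y ^ (univ.filter fun i => y i ≠ 0).card := by
          rw [← Finset.sum_filter_add_sum_filter_not univ
            (fun y : Fin n → F => ∀ x ∈ C, ∑ i, x i * y i = 0)]
          have h2 : ∑ y ∈ univ.filter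
              (fun y : Fin n → F => ¬ ∀ x ∈ C, ∑ i, x i * y i = 0),
              (∑ x ∈ univ.filter (fun x => x ∈ C), χ (∑ i, x i * y i)) *
                (X ^ (n - (univ.filter fun i => y i ≠ 0).card) *
                  Y ^ (univ.filter fun i => y i ≠ 0).card) = 0 := by
            refine Finset.sum_eq_zero fun y hy => ?_
            rw [hker y (Finset.mem_filter.mp hy).2, zero_mul]
          rw [h2, add_zero, Finset.mul_sum]
          refine Finset.sum_congr rfl fun y hy => ?_
          have hy' := (Finset.mem_filter.mp hy).2
          have h1 : (∑ x ∈ univ.filter (fun x => x ∈ C), χ (∑ i, x i * y i))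
              = (Nat.card C : ℂ) := by
            rw [Finset.sum_congr rfl fun x hx => ?_, Finset.sum_const, nsmul_eq_mul,
              mul_one, hcard]
            rw [hy' x (Finset.mem_filter.mp hx).2, AddChar.map_zero_eq_one]
          rw [h1]
  rw [key, inv_mul_cancel_left₀ hN]
end

section
/- Let q = p^v be an odd prime power and C ⊆ 𝔽_q^N a linear code. Then QR_C(X,Y,Z) = (1/|C^⊥|) · QR_{C^⊥}(X', Y', Z'), where X' = X + ((q−1)/2)(Y+Z), Y' = X + (−(Y+Z) + ε_q √q (Y−Z))/2, Z' = X + (−(Y+Z) + ε_q √q (Z−Y))/2, and ε_q = 1 if q ≡ 1 (mod 4), ε_q = i if q ≡ 3 (mod 4). -/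
open Finset

/-- The number of coordinates of a codeword that are nonzero squares. -/
noncomputable def resCount {ι F : Type*} [Field F] (c : ι → F) : ℕ :=
  Nat.card {i : ι // c i ≠ 0 ∧ IsSquare (c i)}

/-- The number of coordinates of a codeword that are nonsquares. -/
noncomputable def nresCount {ι F : Type*} [Field F] (c : ι → F) : ℕ :=
  Nat.card {i : ι // ¬ IsSquare (c i)}

/-- The Hamming weight: the number of nonzero coordinates of a codeword. -/
noncomputable def wtCount {ι F : Type*} [Field F] (c : ι → F) : ℕ :=
  Nat.card {i : ι // c i ≠ 0}

/-!
The coordinatewise weight `g` taking the values `X`, `Y`, `Z` on zero, nonzero squares and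
nonsquares makes `x ↦ ∏ i, g (x i)` a product function, so Poisson summation over `C` turns
`|C^⊥| · QR_C` into a sum over `C^⊥` of products of the one-variable transforms
`ĝ b = ∑ a, ψ (a * b) * g a`. Writing `g = (X - (Y+Z)/2) δ₀ + (Y+Z)/2 + (Y-Z)/2 · χ` with `χ` the
quadratic character, `ĝ` has the same shape, with the Gauss sum `G(χ, ψ)` scaling the `χ`-part
(`∑ a, χ a ψ (a * b) = χ b G(χ, ψ)`). Finally `G(χ, ψ)² = χ(-1) q` and replacing `ψ` by `ψ(a ·)`
for a nonsquare `a` flips the sign of `G`, so `ψ` can be chosen with `G(χ, ψ) = ε_q √q`.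
-/

open Matrix

lemma AddChar.map_sum_eq_prod {A M ι : Type*} [AddCommMonoid A] [CommMonoid M]
    (ψ : AddChar A M) (s : Finset ι) (f : ι → A) : ψ (∑ i ∈ s, f i) = ∏ i ∈ s, ψ (f i) :=
  map_prod ψ.toMonoidHom (fun i => Multiplicative.ofAdd (f i)) s

lemma gaussSum_mulShift_of_isQuadratic {R R' : Type*} [Field R] [Fintype R] [CommRing R']
    [IsDomain R'] {χ : MulChar R R'} (hχ₁ : χ ≠ 1) (hχ₂ : χ.IsQuadratic) (ψ : AddChar R R')
    (b : R) : gaussSum χ (ψ.mulShift b) = χ b * gaussSum χ ψ := by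
  rcases eq_or_ne b 0 with rfl | hb
  · rw [AddChar.mulShift_zero, gaussSum_one_right hχ₁, MulChar.map_zero, zero_mul]
  · rw [← hb.isUnit.unit_spec, gaussSum_mulShift_eq, hχ₂.inv]

section DualCode

open scoped Classical

variable {K ι : Type*} [Field K] [Fintype ι]

def dualCode (C : Submodule K (ι → K)) : Submodule K (ι → K) :=
  LinearMap.BilinForm.orthogonal (dotProductBilin K K) C

lemma mem_dualCode {C : Submodule K (ι → K)} {y : ι → K} :
    y ∈ dualCode C ↔ ∀ x ∈ C, x ⬝ᵥ y = 0 :=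
  LinearMap.BilinForm.mem_orthogonal_iff

lemma exists_mem_dualCode_dotProduct_ne_zero {C : Submodule K (ι → K)} {x : ι → K}
    (hx : x ∉ C) : ∃ y ∈ dualCode C, x ⬝ᵥ y ≠ 0 := by
  obtain ⟨f, hfx, hfC⟩ := Submodule.exists_dual_map_eq_bot_of_notMem hx inferInstance
  have hf : ∀ z, z ⬝ᵥ (dotProductEquiv K ι).symm f = f z := fun z => by
    rw [dotProduct_comm, ← dotProductEquiv_apply_apply, LinearEquiv.apply_symm_apply]
  refine ⟨(dotProductEquiv K ι).symm f, mem_dualCode.mpr fun c hc => ?_, by rwa [hf]⟩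
  rw [hf, ← Submodule.mem_bot K, ← hfC]
  exact Submodule.mem_map_of_mem hc

variable [Fintype K]

lemma sum_dualCode_addChar_dotProduct {ψ : AddChar K ℂ} (hψ : ψ.IsPrimitive)
    (C : Submodule K (ι → K)) (x : ι → K) :
    ∑ y ∈ univ.filter (· ∈ dualCode C), ψ (x ⬝ᵥ y) =
      if x ∈ C then (#(univ.filter (· ∈ dualCode C)) : ℂ) else 0 := by
  split_ifs with hx
  · rw [sum_congr rfl fun y hy => by
      rw [mem_dualCode.mp (mem_filter.mp hy).2 x hx, AddChar.map_zero_eq_one]]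
    simp
  obtain ⟨y₀, hy₀, hxy₀⟩ := exists_mem_dualCode_dotProduct_ne_zero hx
  obtain ⟨u, hu⟩ := AddChar.ne_one_iff.mp (by simpa using hψ one_ne_zero)
  let φ : AddChar (dualCode C) ℂ :=
    ψ.compAddMonoidHom ((dotProductBilin K K x).comp (dualCode C).subtype).toAddMonoidHom
  have hφ : φ ≠ 1 := AddChar.ne_one_iff.mpr
    ⟨⟨(u / x ⬝ᵥ y₀) • y₀, (dualCode C).smul_mem _ hy₀⟩, by
      simpa [φ, dotProduct_smul, div_mul_cancel₀ _ hxy₀] using hu⟩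
  rw [sum_subtype _ (fun y => mem_filter_univ y)]
  exact AddChar.sum_eq_zero_of_ne_one hφ

lemma card_dualCode_mul_sum_eq_sum_fourier {ψ : AddChar K ℂ} (hψ : ψ.IsPrimitive)
    (C : Submodule K (ι → K)) (f : (ι → K) → ℂ) :
    #(univ.filter (· ∈ dualCode C)) * ∑ c ∈ univ.filter (· ∈ C), f c =
      ∑ y ∈ univ.filter (· ∈ dualCode C), ∑ x, ψ (x ⬝ᵥ y) * f x := by
  simp_rw [sum_comm (s := univ.filter (· ∈ dualCode C)), ← sum_mul,
    sum_dualCode_addChar_dotProduct hψ, ite_mul, zero_mul, ← sum_filter, mul_sum]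

lemma sum_addChar_dotProduct_mul_prod (ψ : AddChar K ℂ) (g : K → ℂ) (y : ι → K) :
    ∑ x : ι → K, ψ (x ⬝ᵥ y) * ∏ i, g (x i) = ∏ i, ∑ a, ψ (a * y i) * g a := by
  simp_rw [Fintype.prod_sum, dotProduct, AddChar.map_sum_eq_prod, ← prod_mul_distrib]

end DualCode

section QRWeight

open scoped Classical

variable {K ι : Type*} [Field K] [Fintype ι]

noncomputable def qrWeight (X Y Z : ℂ) (a : K) : ℂ :=
  if a = 0 then X else if IsSquare a then Y else Z

lemma card_sub_wtCount (c : ι → K) : Fintype.card ι - wtCount c = #(univ.filter (c · = 0)) := by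
  rw [wtCount, Nat.card_eq_fintype_card, Fintype.card_subtype_compl,
    Nat.sub_sub_self (Fintype.card_subtype_le _), Fintype.card_subtype]

lemma prod_qrWeight (X Y Z : ℂ) (c : ι → K) :
    ∏ i, qrWeight X Y Z (c i) =
      X ^ (Fintype.card ι - wtCount c) * Y ^ resCount c * Z ^ nresCount c := by
  have hnres (a : K) (ha : ¬IsSquare a) : a ≠ 0 := by rintro rfl; exact ha IsSquare.zero
  rw [card_sub_wtCount, resCount, nresCount, Nat.card_eq_fintype_card, Fintype.card_subtype,
    Nat.card_eq_fintype_card, Fintype.card_subtype]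
  simp only [qrWeight, prod_ite, prod_const, filter_filter]
  rw [mul_assoc, filter_congr fun i _ => and_iff_right_of_imp (hnres (c i))]

variable [Fintype K]

variable (K) in
noncomputable def complexQuadraticChar : MulChar K ℂ :=
  (quadraticChar K).ringHomComp (Int.castRingHom ℂ)

lemma complexQuadraticChar_apply (a : K) :
    complexQuadraticChar K a = quadraticChar K a :=
  rfl

lemma complexQuadraticChar_ne_one (hK : ringChar K ≠ 2) : complexQuadraticChar K ≠ 1 :=
  (MulChar.ringHomComp_ne_one_iff Int.cast_injective).mpr (quadraticChar_ne_one hK)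

lemma complexQuadraticChar_isQuadratic : (complexQuadraticChar K).IsQuadratic :=
  (quadraticChar_isQuadratic K).comp _

lemma qrWeight_eq_add_quadraticChar (X Y Z : ℂ) (a : K) :
    qrWeight X Y Z a = (if a = 0 then X - (Y + Z) / 2 else 0) + (Y + Z) / 2 +
      (Y - Z) / 2 * complexQuadraticChar K a := by
  simp only [qrWeight, complexQuadraticChar_apply, quadraticChar_apply, quadraticCharFun]
  split_ifs <;> push_cast <;> ring

lemma sum_addChar_mul_qrWeight (hK : ringChar K ≠ 2) {ψ : AddChar K ℂ} (hψ : ψ.IsPrimitive)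
    (X Y Z : ℂ) (b : K) :
    ∑ a, ψ (a * b) * qrWeight X Y Z a =
      qrWeight (X + ((Fintype.card K : ℂ) - 1) / 2 * (Y + Z))
        (X + (-(Y + Z) + gaussSum (complexQuadraticChar K) ψ * (Y - Z)) / 2)
        (X + (-(Y + Z) + gaussSum (complexQuadraticChar K) ψ * (Z - Y)) / 2) b := by
  have hδ : ∑ a : K, ψ (a * b) * (if a = 0 then X - (Y + Z) / 2 else 0) = X - (Y + Z) / 2 := by
    simp
  have hψb : ∑ a, ψ (a * b) * ((Y + Z) / 2) =
      (if b = 0 then (Fintype.card K : ℂ) else 0) * ((Y + Z) / 2) := by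
    rw [← sum_mul, AddChar.sum_mulShift b hψ, Nat.cast_ite, Nat.cast_zero]
  have hχψb : ∑ a, ψ (a * b) * ((Y - Z) / 2 * complexQuadraticChar K a) =
      (Y - Z) / 2 * (complexQuadraticChar K b * gaussSum (complexQuadraticChar K) ψ) := by
    rw [← gaussSum_mulShift_of_isQuadratic (complexQuadraticChar_ne_one hK)
      complexQuadraticChar_isQuadratic, gaussSum, mul_sum]
    exact sum_congr rfl fun a _ => by rw [AddChar.mulShift_apply, mul_comm b]; ring
  simp only [qrWeight_eq_add_quadraticChar X Y Z, mul_add, sum_add_distrib, hδ, hψb, hχψb]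
  simp only [qrWeight, complexQuadraticChar_apply, quadraticChar_apply, quadraticCharFun]
  split_ifs <;> push_cast <;> ring

lemma exists_isPrimitive_gaussSum_eq (hK : ringChar K ≠ 2) {s : ℂ}
    (hs : s ^ 2 = complexQuadraticChar K (-1) * Fintype.card K) :
    ∃ ψ : AddChar K ℂ, ψ.IsPrimitive ∧ gaussSum (complexQuadraticChar K) ψ = s := by
  have hψ₀ := AddChar.FiniteField.primitiveChar_to_Complex_isPrimitive K
  have hsq := (gaussSum_sq (complexQuadraticChar_ne_one hK) complexQuadraticChar_isQuadratic
    hψ₀).trans hs.symm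
  rcases sq_eq_sq_iff_eq_or_eq_neg.mp hsq with h | h
  · exact ⟨_, hψ₀, h⟩
  obtain ⟨a, ha⟩ := quadraticChar_exists_neg_one hK
  have ha₀ : a ≠ 0 := by rintro rfl; simp at ha
  refine ⟨_, AddChar.IsPrimitive.of_ne_one (hψ₀ ha₀), ?_⟩
  rw [gaussSum_mulShift_of_isQuadratic (complexQuadraticChar_ne_one hK)
    complexQuadraticChar_isQuadratic, h, complexQuadraticChar_apply, ha]
  push_cast
  ring

lemma sq_mul_sqrt_card_eq (hK : ringChar K ≠ 2) :
    ((if Fintype.card K % 4 = 1 then 1 else Complex.I) * Real.sqrt (Fintype.card K)) ^ 2 =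
      complexQuadraticChar K (-1) * Fintype.card K := by
  rw [mul_pow, ← Complex.ofReal_pow, Real.sq_sqrt (Nat.cast_nonneg _), complexQuadraticChar_apply,
    quadraticChar_neg_one hK, ZMod.χ₄_nat_eq_if_mod_four]
  have := FiniteField.odd_card_of_char_ne_two hK
  split_ifs <;> first | omega | simp

end QRWeight

open scoped Classical in
/-- The MacWilliams theorem for the quadratic residue weight enumerator: for `q` odd and a
linear code `C ⊆ 𝔽_q^N`, `QR_C(X,Y,Z) = (1/|C^⊥|) QR_{C^⊥}(X', Y', Z')` where
`X' = X + ((q-1)/2)(Y+Z)`, `Y' = X + (-(Y+Z) + ε_q √q (Y-Z))/2`,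
`Z' = X + (-(Y+Z) + ε_q √q (Z-Y))/2`, and `ε_q = 1` if `q ≡ 1 (mod 4)`, `ε_q = i` if
`q ≡ 3 (mod 4)`. -/
theorem qr_macwilliams {F : Type*} [Field F] [Fintype F]
    (hodd : Odd (Fintype.card F)) {N : ℕ} (C : Submodule F (Fin N → F))
    (X Y Z : ℂ) (ε : ℂ)
    (hε : ε = if Fintype.card F % 4 = 1 then 1 else Complex.I) :
    (∑ c ∈ univ.filter (fun c => c ∈ C),
        X ^ (N - wtCount c) * Y ^ resCount c * Z ^ nresCount c) =
      ((univ.filter (fun y : Fin N → F => ∀ x ∈ C, ∑ i, x i * y i = 0)).card : ℂ)⁻¹ *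
        ∑ y ∈ univ.filter (fun y : Fin N → F => ∀ x ∈ C, ∑ i, x i * y i = 0),
          (X + ((Fintype.card F : ℂ) - 1) / 2 * (Y + Z)) ^ (N - wtCount y) *
            (X + (-(Y + Z) + ε * Real.sqrt (Fintype.card F) * (Y - Z)) / 2) ^ resCount y *
            (X + (-(Y + Z) + ε * Real.sqrt (Fintype.card F) * (Z - Y)) / 2) ^ nresCount y := by
  have hK : ringChar F ≠ 2 := fun h =>
    Nat.not_even_iff_odd.mpr hodd (Nat.even_iff.mpr (FiniteField.even_card_of_char_two h))
  obtain ⟨ψ, hψ, hG⟩ := exists_isPrimitive_gaussSum_eq hK (hε ▸ sq_mul_sqrt_card_eq hK)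
  have hdual : univ.filter (fun y : Fin N → F => ∀ x ∈ C, ∑ i, x i * y i = 0) =
      univ.filter (· ∈ dualCode C) := by
    ext y
    simp [mem_dualCode, dotProduct]
  have hpoisson := card_dualCode_mul_sum_eq_sum_fourier hψ C fun x => ∏ i, qrWeight X Y Z (x i)
  simp only [sum_addChar_dotProduct_mul_prod, sum_addChar_mul_qrWeight hK hψ] at hpoisson
  simp only [prod_qrWeight, hG, Fintype.card_fin] at hpoisson
  rw [hdual, eq_inv_mul_iff_mul_eq₀ (by simpa using ⟨0, (dualCode C).zero_mem⟩)]
  -- the two sides differ only in their decidability instances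
  convert hpoisson
end

section
/- For an odd prime p, the count of weighted isomorphism classes of elliptic curves over 𝔽_p with at least one nonzero rational 2-torsion point satisfies S*_{2,0}(p) = Σ_{E/𝔽_p, E(𝔽_p)[2] ≠ 0} 1/|Aut(E)| = (2p − 1)/3. -/
/-- The Weierstrass curve with coefficient tuple `(a₁, a₂, a₃, a₄, a₆)`. -/
def wcOf {R : Type*} [CommRing R] (v : R × R × R × R × R) : WeierstrassCurve R :=
  ⟨v.1, v.2.1, v.2.2.1, v.2.2.2.1, v.2.2.2.2⟩

/-- The number of rational points of a Weierstrass curve over a finite field: the point at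
infinity together with the affine solutions of the Weierstrass equation. -/
noncomputable def wcPointCount {R : Type*} [CommRing R] (W : WeierstrassCurve R) : ℕ :=
  1 + Nat.card {P : R × R // W.toAffine.Equation P.1 P.2}

/-!
Completing the square (`WeierstrassCurve.toCharNeTwoNF`) matches the nonsingular Weierstrass
equations over `𝔽_q`, `q²` to one, with the nonsingular curves `y² = f(x)`, `f` a monic cubic,
without changing the number of points. Each nonzero value of `f` has zero or two square roots, so
`#E(𝔽_q)` is even iff the number `r` of roots of `f` is odd; and `r ∈ {0, 1, 3}` when `f` is
squarefree, so that `3 [r odd] = 3 r - r (r - 1)`. Summed over `f`, `r` counts pairs of a root `u`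
and a cubic `(x - u)((x - u)² + σ (x - u) + τ)` with `τ ≠ 0` and `σ² ≠ 4τ`, `q (q - 1)²` in all,
and `r (r - 1)` counts triples of distinct roots, `q (q - 1) (q - 2)` in all. Hence the odd-`r`
cubics number `q (q - 1) (2q - 1) / 3`.
-/

open Finset WeierstrassCurve

variable {F : Type*} [Field F]

lemma WeierstrassCurve.Affine.equation_smul_iff (C : VariableChange F) (W : WeierstrassCurve F)
    (x y : F) : (C • W).toAffine.Equation x y ↔
      W.toAffine.Equation (C.u ^ 2 * x + C.r) (C.u ^ 3 * y + C.u ^ 2 * C.s * x + C.t) := by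
  have hu : (C.u : F) ≠ 0 := C.u.ne_zero
  rw [equation_iff', equation_iff', variableChange_def, ← mul_right_inj' (pow_ne_zero 6 hu),
    mul_zero]
  congr! 1
  simp only [Units.val_inv_eq_inv_val]
  field_simp
  ring

def WeierstrassCurve.VariableChange.pointEquiv (C : VariableChange F) : F × F ≃ F × F where
  toFun P := (C.u ^ 2 * P.1 + C.r, C.u ^ 3 * P.2 + C.u ^ 2 * C.s * P.1 + C.t)
  invFun Q := ((Q.1 - C.r) / C.u ^ 2, (Q.2 - C.t - C.s * (Q.1 - C.r)) / C.u ^ 3)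
  left_inv P := by
    have hu : (C.u : F) ≠ 0 := C.u.ne_zero
    ext <;> field_simp <;> ring
  right_inv Q := by
    have hu : (C.u : F) ≠ 0 := C.u.ne_zero
    ext <;> field_simp <;> ring

lemma wcPointCount_smul (C : VariableChange F) (W : WeierstrassCurve F) :
    wcPointCount (C • W) = wcPointCount W := by
  rw [wcPointCount, wcPointCount,
    Nat.card_congr (C.pointEquiv.subtypeEquiv (q := fun Q => W.toAffine.Equation Q.1 Q.2)
      fun P => Affine.equation_smul_iff C W P.1 P.2)]

lemma wcOf_injective : Function.Injective (wcOf (R := F)) := by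
  rintro ⟨a₁, a₂, a₃, a₄, a₆⟩ ⟨a₁', a₂', a₃', a₄', a₆'⟩ h
  simp_all [wcOf]

def cubicCurve (w : F × F × F) : WeierstrassCurve F := wcOf (0, w.1, 0, w.2.1, w.2.2)

def cubic (w : F × F × F) (x : F) : F := x ^ 3 + w.1 * x ^ 2 + w.2.1 * x + w.2.2

lemma equation_cubicCurve_iff (w : F × F × F) (x y : F) :
    (cubicCurve w).toAffine.Equation x y ↔ y ^ 2 = cubic w x := by
  simp [Affine.equation_iff, cubicCurve, wcOf, cubic]

lemma sixteen_ne_zero_of_ringChar_ne_two (hF : ringChar F ≠ 2) : (16 : F) ≠ 0 := by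
  have h := pow_ne_zero 4 (Ring.two_ne_zero hF)
  rwa [show (2 : F) ^ 4 = 16 by norm_num] at h

def cubicWithRoot (u σ τ : F) : F × F × F :=
  (σ - 3 * u, 3 * u ^ 2 - 2 * σ * u + τ, σ * u ^ 2 - u ^ 3 - τ * u)

lemma cubic_cubicWithRoot (u σ τ x : F) :
    cubic (cubicWithRoot u σ τ) x = (x - u) ^ 3 + σ * (x - u) ^ 2 + τ * (x - u) := by
  simp only [cubic, cubicWithRoot]
  ring

lemma cubicWithRoot_of_cubic_eq_zero {w : F × F × F} {u : F} (hu : cubic w u = 0) :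
    cubicWithRoot u (w.1 + 3 * u) (3 * u ^ 2 + 2 * w.1 * u + w.2.1) = w := by
  obtain ⟨a, b, c⟩ := w
  simp only [cubic] at hu
  simp only [cubicWithRoot, Prod.mk.injEq]
  exact ⟨by ring, by ring, by linear_combination -hu⟩

lemma cubicCurve_cubicWithRoot_Δ_ne_zero_iff (hF : ringChar F ≠ 2) (u σ τ : F) :
    (cubicCurve (cubicWithRoot u σ τ)).Δ ≠ 0 ↔ τ ≠ 0 ∧ discrim 1 σ τ ≠ 0 := by
  have hΔ : (cubicCurve (cubicWithRoot u σ τ)).Δ = 16 * τ ^ 2 * discrim 1 σ τ := by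
    simp only [cubicCurve, cubicWithRoot, wcOf, Δ, b₂, b₄, b₆, b₈, discrim]
    ring
  simp [hΔ, sixteen_ne_zero_of_ringChar_ne_two hF]

def cubicOfRoots (u v e : F) : F × F × F := (-(u + v + e), u * v + u * e + v * e, -(u * v * e))

lemma cubic_cubicOfRoots (u v e x : F) :
    cubic (cubicOfRoots u v e) x = (x - u) * (x - v) * (x - e) := by
  simp only [cubic, cubicOfRoots]
  ring

lemma cubicOfRoots_of_cubic_eq_zero {w : F × F × F} {u v : F} (huv : u ≠ v) (hu : cubic w u = 0)
    (hv : cubic w v = 0) : cubicOfRoots u v (-(w.1 + u + v)) = w := by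
  obtain ⟨a, b, c⟩ := w
  simp only [cubic] at hu hv
  have hb : b = -(u ^ 2 + u * v + v ^ 2) - a * (u + v) := by
    have h : (u - v) * (b - (-(u ^ 2 + u * v + v ^ 2) - a * (u + v))) = 0 := by
      linear_combination hu - hv
    exact sub_eq_zero.mp ((mul_eq_zero.mp h).resolve_left (sub_ne_zero.mpr huv))
  simp only [cubicOfRoots, Prod.mk.injEq]
  exact ⟨by ring, by linear_combination -hb, by linear_combination -hu + u * hb⟩

lemma cubicCurve_cubicOfRoots_Δ_ne_zero_iff (hF : ringChar F ≠ 2) (u v e : F) :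
    (cubicCurve (cubicOfRoots u v e)).Δ ≠ 0 ↔ u ≠ v ∧ u ≠ e ∧ v ≠ e := by
  have hΔ : (cubicCurve (cubicOfRoots u v e)).Δ = 16 * ((u - v) * (u - e) * (v - e)) ^ 2 := by
    simp only [cubicCurve, cubicOfRoots, wcOf, Δ, b₂, b₄, b₆, b₈]
    ring
  simp [hΔ, sixteen_ne_zero_of_ringChar_ne_two hF, sub_eq_zero, and_assoc]

section NormalForm

variable [Invertible (2 : F)]

def toCubicModel (v : F × F × F × F × F) : (F × F) × (F × F × F) :=
  let W := (wcOf v).toCharNeTwoNF • wcOf v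
  ((v.1, v.2.2.1), (W.a₂, W.a₄, W.a₆))

lemma cubicCurve_toCubicModel_snd (v : F × F × F × F × F) :
    cubicCurve (toCubicModel v).2 = (wcOf v).toCharNeTwoNF • wcOf v := by
  ext <;> simp [cubicCurve, toCubicModel, wcOf]

lemma toCubicModel_injective : Function.Injective (toCubicModel (F := F)) := by
  intro v v' h
  have hC : (wcOf v).toCharNeTwoNF = (wcOf v').toCharNeTwoNF := by
    have h₁₃ := congrArg Prod.fst h
    simp only [toCubicModel, Prod.mk.injEq] at h₁₃
    simp [toCharNeTwoNF, wcOf, h₁₃]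
  apply wcOf_injective
  rw [← smul_left_cancel_iff (wcOf v).toCharNeTwoNF, ← cubicCurve_toCubicModel_snd, h, hC,
    cubicCurve_toCubicModel_snd]

variable [Fintype F]

lemma card_filter_wcOf (P : WeierstrassCurve F → Prop) [DecidablePred P]
    (hP : ∀ (C : VariableChange F) (W : WeierstrassCurve F), P (C • W) ↔ P W) :
    #{v | P (wcOf v)} = Fintype.card F ^ 2 * #{w | P (cubicCurve w)} := by
  calc #{v | P (wcOf v)} = #{z : (F × F) × (F × F × F) | P (cubicCurve z.2)} :=
        card_bijective toCubicModel
          ((Fintype.bijective_iff_injective_and_card _).mpr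
            ⟨toCubicModel_injective, by simp only [Fintype.card_prod]; ring⟩)
          fun v => by simp [cubicCurve_toCubicModel_snd, hP]
    _ = Fintype.card F ^ 2 * #{w | P (cubicCurve w)} := by
        rw [← univ_product_univ, filter_product_right (fun w => P (cubicCurve w)), card_product,
          card_univ, Fintype.card_prod, sq]

end NormalForm

variable [Fintype F] [DecidableEq F]

def cubicRoots (w : F × F × F) : Finset F := {x | cubic w x = 0}

lemma wcPointCount_cubicCurve (w : F × F × F) :
    wcPointCount (cubicCurve w) = 1 + ∑ x, #{y | y ^ 2 = cubic w x} := by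
  rw [wcPointCount,
    Nat.card_congr (Equiv.subtypeEquivRight fun P : F × F => equation_cubicCurve_iff w P.1 P.2),
    Nat.card_eq_fintype_card, Fintype.card_subtype, card_filter, Fintype.sum_prod_type]
  simp only [card_filter]

lemma odd_card_sqrts_iff (hF : ringChar F ≠ 2) (d : F) : Odd #{y | y ^ 2 = d} ↔ d = 0 := by
  have h := quadraticChar_card_sqrts hF d
  rw [Set.toFinset_ofPred] at h
  by_cases hd : d = 0
  · simp [hd, filter_eq']
  · have hcard : (#{y | y ^ 2 = d} : ℤ) = 2 ∨ (#{y | y ^ 2 = d} : ℤ) = 0 := by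
      rcases quadraticChar_dichotomy hd with h1 | h1 <;> rw [h1] at h <;> [left; right] <;> linarith
    simp only [hd, iff_false, Nat.not_odd_iff_even]
    rcases hcard with h2 | h2 <;> norm_cast at h2 <;> rw [h2] <;> decide

lemma even_wcPointCount_cubicCurve_iff (hF : ringChar F ≠ 2) (w : F × F × F) :
    Even (wcPointCount (cubicCurve w)) ↔ Odd #(cubicRoots w) := by
  rw [wcPointCount_cubicCurve, add_comm, Nat.even_add_one, Nat.not_even_iff_odd,
    odd_sum_iff_odd_card_odd]
  simp only [odd_card_sqrts_iff hF, cubicRoots]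

lemma cubicRoots_cubicOfRoots (u v e : F) : cubicRoots (cubicOfRoots u v e) = {u, v, e} := by
  ext x
  simp [cubicRoots, cubic_cubicOfRoots, sub_eq_zero, or_assoc]

lemma card_cubicRoots_of_Δ_ne_zero (hF : ringChar F ≠ 2) {w : F × F × F}
    (hw : (cubicCurve w).Δ ≠ 0) :
    #(cubicRoots w) = 0 ∨ #(cubicRoots w) = 1 ∨ #(cubicRoots w) = 3 := by
  by_cases h : #(cubicRoots w) ≤ 1
  · omega
  obtain ⟨u, hu, v, hv, huv⟩ := one_lt_card.mp (not_le.mp h)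
  simp only [cubicRoots, mem_filter, mem_univ, true_and] at hu hv
  rw [← cubicOfRoots_of_cubic_eq_zero huv hu hv] at hw ⊢
  obtain ⟨huv, hue, hve⟩ := (cubicCurve_cubicOfRoots_Δ_ne_zero_iff hF _ _ _).mp hw
  rw [cubicRoots_cubicOfRoots, card_eq_three.mpr ⟨u, v, _, huv, hue, hve, rfl⟩]
  omega

variable (F) in
def nonsingularCubics : Finset (F × F × F) := {w | (cubicCurve w).Δ ≠ 0}

lemma card_filter_ne_zero_discrim_ne_zero (hF : ringChar F ≠ 2) :
    #{z : F × F | z.2 ≠ 0 ∧ discrim 1 z.1 z.2 ≠ 0} = (Fintype.card F - 1) ^ 2 := by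
  have h4 : (4 : F) ≠ 0 := by
    have h := pow_ne_zero 2 (Ring.two_ne_zero hF)
    rwa [show (2 : F) ^ 2 = 4 by norm_num] at h
  have fiber (σ : F) : #{τ : F | τ ≠ 0 ∧ discrim 1 σ τ ≠ 0} =
      if σ = 0 then Fintype.card F - 1 else Fintype.card F - 2 := by
    have hfib : ({τ | τ ≠ 0 ∧ discrim 1 σ τ ≠ 0} : Finset F) = univ \ {0, σ ^ 2 / 4} := by
      have hdisc (τ : F) : discrim 1 σ τ = 0 ↔ τ = σ ^ 2 / 4 := by
        rw [discrim, eq_div_iff h4, sub_eq_zero, mul_one, mul_comm, eq_comm]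
      ext τ
      simp [hdisc]
    rw [hfib, card_univ_sdiff]
    split_ifs with hσ
    · simp [hσ]
    · rw [card_pair (div_ne_zero (pow_ne_zero 2 hσ) h4).symm]
  have hq : 2 ≤ Fintype.card F := Fintype.one_lt_card
  calc #{z : F × F | z.2 ≠ 0 ∧ discrim 1 z.1 z.2 ≠ 0}
      = ∑ σ : F, #{τ : F | τ ≠ 0 ∧ discrim 1 σ τ ≠ 0} := by
        simp only [card_filter, Fintype.sum_prod_type]
    _ = (Fintype.card F - 1) + (Fintype.card F - 1) * (Fintype.card F - 2) := by
        rw [sum_congr rfl fun σ _ => fiber σ, ← add_sum_erase _ _ (mem_univ 0), if_pos rfl,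
          sum_congr rfl fun σ hσ => if_neg (ne_of_mem_erase hσ), sum_const,
          card_erase_of_mem (mem_univ 0), card_univ, smul_eq_mul]
    _ = (Fintype.card F - 1) ^ 2 := by
        zify [hq, hq.trans' one_le_two]
        ring

lemma card_sigma_cubicRoots (hF : ringChar F ≠ 2) :
    #((nonsingularCubics F).sigma cubicRoots) = Fintype.card F * (Fintype.card F - 1) ^ 2 := by
  rw [← card_filter_ne_zero_discrim_ne_zero hF, ← card_univ, ← card_product]
  refine card_bij' (fun p _ => (p.2, (p.1.1 + 3 * p.2, 3 * p.2 ^ 2 + 2 * p.1.1 * p.2 + p.1.2.1)))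
    (fun z _ => ⟨cubicWithRoot z.1 z.2.1 z.2.2, z.1⟩) ?_ ?_ ?_ ?_
  · rintro ⟨w, u⟩ h
    simp only [nonsingularCubics, cubicRoots, mem_sigma, mem_filter, mem_univ, true_and] at h
    rw [← cubicWithRoot_of_cubic_eq_zero h.2, cubicCurve_cubicWithRoot_Δ_ne_zero_iff hF] at h
    simpa using h.1
  · rintro ⟨u, σ, τ⟩ h
    simp only [mem_product, mem_univ, mem_filter, true_and] at h
    simp [nonsingularCubics, cubicRoots, cubicCurve_cubicWithRoot_Δ_ne_zero_iff hF, h,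
      cubic_cubicWithRoot]
  · rintro ⟨w, u⟩ h
    simp only [nonsingularCubics, cubicRoots, mem_sigma, mem_filter, mem_univ, true_and] at h
    exact Sigma.ext (cubicWithRoot_of_cubic_eq_zero h.2) HEq.rfl
  · rintro ⟨u, σ, τ⟩ -
    simp only [cubicWithRoot, Prod.mk.injEq]
    exact ⟨trivial, by ring, by ring⟩

lemma card_sigma_offDiag_cubicRoots (hF : ringChar F ≠ 2) :
    #((nonsingularCubics F).sigma fun w => (cubicRoots w).offDiag) =
      (Fintype.card F * Fintype.card F - Fintype.card F) * (Fintype.card F - 2) := by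
  have hdistinct : #(univ.offDiag.sigma fun p : F × F => univ \ {p.1, p.2}) =
      (Fintype.card F * Fintype.card F - Fintype.card F) * (Fintype.card F - 2) := by
    rw [card_sigma, sum_congr rfl fun p hp => by
      rw [card_univ_sdiff, card_pair (mem_offDiag.mp hp).2.2], sum_const, offDiag_card, card_univ,
      smul_eq_mul]
  rw [← hdistinct]
  refine card_bij' (fun p _ => ⟨p.2, -(p.1.1 + p.2.1 + p.2.2)⟩)
    (fun p _ => ⟨cubicOfRoots p.1.1 p.1.2 p.2, p.1⟩) ?_ ?_ ?_ ?_
  · rintro ⟨w, u, v⟩ h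
    simp only [nonsingularCubics, cubicRoots, mem_sigma, mem_filter, mem_offDiag, mem_univ,
      true_and] at h
    obtain ⟨hw, hu, hv, huv⟩ := h
    rw [← cubicOfRoots_of_cubic_eq_zero huv hu hv, cubicCurve_cubicOfRoots_Δ_ne_zero_iff hF] at hw
    simp only [mem_sigma, mem_offDiag, mem_univ, true_and, mem_sdiff, mem_insert, mem_singleton,
      not_or]
    exact ⟨huv, hw.2.1.symm, hw.2.2.symm⟩
  · rintro ⟨⟨u, v⟩, e⟩ h
    simp only [mem_sigma, mem_offDiag, mem_univ, mem_sdiff, mem_insert, mem_singleton, true_and,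
      not_or] at h
    simp [nonsingularCubics, cubicRoots, cubicCurve_cubicOfRoots_Δ_ne_zero_iff hF,
      cubic_cubicOfRoots, h.1, Ne.symm h.2.1, Ne.symm h.2.2]
  · rintro ⟨w, u, v⟩ h
    simp only [nonsingularCubics, cubicRoots, mem_sigma, mem_filter, mem_offDiag, mem_univ,
      true_and] at h
    exact Sigma.ext (cubicOfRoots_of_cubic_eq_zero h.2.2.2 h.2.1 h.2.2.1) HEq.rfl
  · rintro ⟨⟨u, v⟩, e⟩ -
    simp only [cubicOfRoots, Sigma.mk.injEq, heq_eq_eq, true_and]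
    ring

lemma three_mul_card_odd_card_cubicRoots_add (hF : ringChar F ≠ 2) :
    3 * #{w ∈ nonsingularCubics F | Odd #(cubicRoots w)} +
        (Fintype.card F * Fintype.card F - Fintype.card F) * (Fintype.card F - 2) =
      3 * (Fintype.card F * (Fintype.card F - 1) ^ 2) := by
  rw [← card_sigma_offDiag_cubicRoots hF, ← card_sigma_cubicRoots hF, card_sigma, card_sigma,
    card_filter, mul_sum, mul_sum, ← sum_add_distrib]
  refine sum_congr rfl fun w hw => ?_
  rw [offDiag_card]
  rcases card_cubicRoots_of_Δ_ne_zero hF (mem_filter.mp hw).2 with h | h | h <;> rw [h] <;> decide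

theorem three_mul_card_Δ_ne_zero_even_wcPointCount (hF : ringChar F ≠ 2) :
    3 * #{v : F × F × F × F × F | (wcOf v).Δ ≠ 0 ∧ Even (wcPointCount (wcOf v))} =
      Fintype.card F ^ 3 * (Fintype.card F - 1) * (2 * Fintype.card F - 1) := by
  have : Invertible (2 : F) := invertibleOfNonzero (Ring.two_ne_zero hF)
  have hinv (C : VariableChange F) (W : WeierstrassCurve F) :
      (C • W).Δ ≠ 0 ∧ Even (wcPointCount (C • W)) ↔ W.Δ ≠ 0 ∧ Even (wcPointCount W) := by
    simp [variableChange_Δ, wcPointCount_smul]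
  have hcubic : ({w | (cubicCurve w).Δ ≠ 0 ∧ Even (wcPointCount (cubicCurve w))} :
      Finset (F × F × F)) = {w ∈ nonsingularCubics F | Odd #(cubicRoots w)} := by
    simp [nonsingularCubics, filter_filter, even_wcPointCount_cubicCurve_iff hF]
  have key := three_mul_card_odd_card_cubicRoots_add hF
  have hq : 2 ≤ Fintype.card F := Fintype.one_lt_card
  rw [card_filter_wcOf (fun W => W.Δ ≠ 0 ∧ Even (wcPointCount W)) hinv, hcubic]
  zify [hq, hq.trans' one_le_two, Nat.le_mul_self (Fintype.card F),
    (by omega : 1 ≤ 2 * Fintype.card F)] at key ⊢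
  linear_combination (Fintype.card F : ℤ) ^ 2 * key

open scoped Classical in
/-- For an odd prime `p`, the weighted number of isomorphism classes of elliptic curves over
`𝔽_p` with nontrivial rational 2-torsion (equivalently, of even order) is
`S*_{2,0}(p) = Σ 1/|Aut E| = (2p - 1)/3`; the weighted count is computed by counting
nonsingular Weierstrass equations, each isomorphism class accounting for `(p-1)p³/|Aut E|`
of them. -/
theorem weighted_count_two_torsion (p : ℕ) [Fact p.Prime] (hp : p ≠ 2) :
    (((p : ℚ) - 1) * p ^ 3)⁻¹ *
      ((Finset.univ.filter (fun v : ZMod p × ZMod p × ZMod p × ZMod p × ZMod p =>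
        (wcOf v).Δ ≠ 0 ∧ Even (wcPointCount (wcOf v)))).card : ℚ) =
    (2 * (p : ℚ) - 1) / 3 := by
  have hF : ringChar (ZMod p) ≠ 2 := by rwa [ZMod.ringChar_zmod_n]
  have hp1 : 1 < p := (Fact.out : p.Prime).one_lt
  have key := three_mul_card_Δ_ne_zero_even_wcPointCount hF
  rw [ZMod.card] at key
  have hq : ((p : ℚ) - 1) * p ^ 3 ≠ 0 := by
    have : (1 : ℚ) < p := by exact_mod_cast hp1
    positivity
  rw [inv_mul_eq_div, div_eq_div_iff hq three_ne_zero]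
  rw [← Nat.cast_inj (R := ℚ)] at key
  push_cast [Nat.cast_sub hp1.le, Nat.cast_sub (by omega : 1 ≤ 2 * p)] at key
  linear_combination key
end
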